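/- arXiv:2209.12111 — 3 statements merged into one kernel-verified Lean document; each statement's English description precedes it below -/
import Mathlib

section
/- Let d, k ≥ 1, R > 0, L > 0, and let φ : ℝ^d → ℝ^k satisfy |φ(x) − φ(y)| ≤ L·|x − y| for all x, y with |x| ∨ |y| ≤ R, and |φ(0)| ≤ L·R. Then the truncation φ̃ of φ at level R satisfies |φ̃(x) − φ̃(y)| ≤ 4L·|x − y| for all x, y ∈ ℝ^d. -/
set_option maxHeartbeats 1000000


/-- The modified truncation at level `R` of a function `φ` on `ℝ^d`:
`φ̃(x) = φ(x)` if `|x| ≤ R` and `φ̃(x) = (|x|/R)·φ(R x/|x|)` if `|x| > R`. -/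
noncomputable def trunc {d : ℕ} {F : Type*} [NormedAddCommGroup F] [NormedSpace ℝ F]
    (R : ℝ) (φ : EuclideanSpace ℝ (Fin d) → F) (x : EuclideanSpace ℝ (Fin d)) : F :=
  if ‖x‖ ≤ R then φ x else (‖x‖ / R) • φ ((R / ‖x‖) • x)

theorem stmt2 (d k : ℕ) (hd : 1 ≤ d) (hk : 1 ≤ k) (R L : ℝ) (hR : 0 < R) (hL : 0 < L)
    (φ : EuclideanSpace ℝ (Fin d) → EuclideanSpace ℝ (Fin k))
    (hlip : ∀ x y : EuclideanSpace ℝ (Fin d), max ‖x‖ ‖y‖ ≤ R →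
      ‖φ x - φ y‖ ≤ L * ‖x - y‖)
    (h0 : ‖φ 0‖ ≤ L * R) :
    ∀ x y : EuclideanSpace ℝ (Fin d),
      ‖trunc R φ x - trunc R φ y‖ ≤ 4 * L * ‖x - y‖ := by
  have hbound : ∀ z : EuclideanSpace ℝ (Fin d), ‖z‖ ≤ R → ‖φ z‖ ≤ 2 * L * R := by
    intro z hz
    have h1 : ‖φ z - φ 0‖ ≤ L * ‖z - 0‖ := by
      apply hlip z 0
      simp [hz, hR.le]
    have h2 : ‖φ z‖ - ‖φ 0‖ ≤ ‖φ z - φ 0‖ := norm_sub_norm_le _ _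
    have h3 : ‖z - 0‖ = ‖z‖ := by simp
    nlinarith [norm_nonneg z]
  suffices key : ∀ x y : EuclideanSpace ℝ (Fin d), ‖x‖ ≤ ‖y‖ →
      ‖trunc R φ x - trunc R φ y‖ ≤ 4 * L * ‖x - y‖ by
    intro x y
    rcases le_total ‖x‖ ‖y‖ with h | h
    · exact key x y h
    · calc ‖trunc R φ x - trunc R φ y‖ = ‖trunc R φ y - trunc R φ x‖ := norm_sub_rev _ _
        _ ≤ 4 * L * ‖y - x‖ := key y x h
        _ = 4 * L * ‖x - y‖ := by rw [norm_sub_rev]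
  intro x y hxy
  have hD : ‖y‖ - ‖x‖ ≤ ‖x - y‖ := by
    have := abs_norm_sub_norm_le x y
    have := abs_le.1 this
    linarith [this.1]
  have hDnn : (0:ℝ) ≤ ‖x - y‖ := norm_nonneg _
  by_cases hy : ‖y‖ ≤ R
  · -- both inside
    have hx : ‖x‖ ≤ R := hxy.trans hy
    simp only [trunc, if_pos hx, if_pos hy]
    have := hlip x y (max_le hx hy)
    nlinarith
  · push_neg at hy
    have hy0 : (0:ℝ) < ‖y‖ := hR.trans hy
    set y' : EuclideanSpace ℝ (Fin d) := (R / ‖y‖) • y with hy'def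
    have hy' : ‖y'‖ = R := by
      rw [hy'def, norm_smul, Real.norm_eq_abs, abs_of_nonneg (by positivity)]
      field_simp
    have hφy' : ‖φ y'‖ ≤ 2 * L * R := hbound y' (le_of_eq hy')
    have hyy' : ‖y - y'‖ = ‖y‖ - R := by
      have : y - y' = (1 - R / ‖y‖) • y := by rw [hy'def, sub_smul, one_smul]
      rw [this, norm_smul, Real.norm_eq_abs]
      have h1 : R / ‖y‖ ≤ 1 := by
        rw [div_le_one hy0]; exact hy.le
      rw [abs_of_nonneg (by linarith)]
      field_simp
    by_cases hx : ‖x‖ ≤ R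
    · -- mixed case
      simp only [trunc, if_pos hx, if_neg (not_le.2 hy)]
      have hdecomp : φ x - (‖y‖ / R) • φ y' = (φ x - φ y') - ((‖y‖ / R - 1)) • φ y' := by
        rw [sub_smul, one_smul]; abel
      rw [hdecomp]
      have h1 : ‖φ x - φ y'‖ ≤ L * ‖x - y'‖ := hlip x y' (max_le hx (le_of_eq hy'))
      have h2 : ‖x - y'‖ ≤ ‖x - y‖ + (‖y‖ - R) := by
        calc ‖x - y'‖ = ‖(x - y) + (y - y')‖ := by abel_nf
          _ ≤ ‖x - y‖ + ‖y - y'‖ := norm_add_le _ _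
          _ = ‖x - y‖ + (‖y‖ - R) := by rw [hyy']
      have h3 : ‖((‖y‖ / R - 1)) • φ y'‖ = (‖y‖ / R - 1) * ‖φ y'‖ := by
        rw [norm_smul, Real.norm_eq_abs, abs_of_nonneg]
        rw [sub_nonneg, le_div_iff₀ hR]; linarith
      have h4 : ‖(φ x - φ y') - ((‖y‖ / R - 1)) • φ y'‖ ≤
          ‖φ x - φ y'‖ + ‖((‖y‖ / R - 1)) • φ y'‖ := norm_sub_le _ _
      have h5 : (‖y‖ / R - 1) * ‖φ y'‖ ≤ 2 * L * (‖y‖ - R) := by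
        have hnn : 0 ≤ ‖y‖ / R - 1 := by rw [sub_nonneg, le_div_iff₀ hR]; linarith
        calc (‖y‖ / R - 1) * ‖φ y'‖ ≤ (‖y‖ / R - 1) * (2 * L * R) :=
              mul_le_mul_of_nonneg_left hφy' hnn
          _ = 2 * L * (‖y‖ - R) := by field_simp
      have h6 : ‖y‖ - R ≤ ‖x - y‖ := by linarith
      nlinarith
    · -- both outside
      push_neg at hx
      have hx0 : (0:ℝ) < ‖x‖ := hR.trans hx
      set x' : EuclideanSpace ℝ (Fin d) := (R / ‖x‖) • x with hx'def
      have hx' : ‖x'‖ = R := by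
        rw [hx'def, norm_smul, Real.norm_eq_abs, abs_of_nonneg (by positivity)]
        field_simp
      simp only [trunc, if_neg (not_le.2 hx), if_neg (not_le.2 hy)]
      have hdecomp : (‖x‖ / R) • φ x' - (‖y‖ / R) • φ y'
          = (‖x‖ / R) • (φ x' - φ y') + ((‖x‖ - ‖y‖) / R) • φ y' := by
        rw [smul_sub, sub_div, sub_smul]; abel
      rw [hdecomp]
      -- bound ‖x' - y'‖
      have hxy' : x' - y' = (R / ‖y‖) • (x - y) + (R / ‖x‖ - R / ‖y‖) • x := by
        rw [hx'def, hy'def]; module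
      have hcoef : (0:ℝ) ≤ R / ‖x‖ - R / ‖y‖ := by
        rw [sub_nonneg]
        exact div_le_div_of_nonneg_left hR.le hx0 hxy
      have hterm : (R / ‖x‖ - R / ‖y‖) * ‖x‖ = R * (‖y‖ - ‖x‖) / ‖y‖ := by
        field_simp
      have hxy'norm : ‖x' - y'‖ ≤ R / ‖y‖ * ‖x - y‖ + R * (‖y‖ - ‖x‖) / ‖y‖ := by
        rw [hxy']
        calc ‖(R / ‖y‖) • (x - y) + (R / ‖x‖ - R / ‖y‖) • x‖
            ≤ ‖(R / ‖y‖) • (x - y)‖ + ‖(R / ‖x‖ - R / ‖y‖) • x‖ := norm_add_le _ _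
          _ = R / ‖y‖ * ‖x - y‖ + (R / ‖x‖ - R / ‖y‖) * ‖x‖ := by
              rw [norm_smul, norm_smul, Real.norm_eq_abs, Real.norm_eq_abs,
                abs_of_nonneg (by positivity), abs_of_nonneg hcoef]
          _ = R / ‖y‖ * ‖x - y‖ + R * (‖y‖ - ‖x‖) / ‖y‖ := by rw [hterm]
      have hφ' : ‖φ x' - φ y'‖ ≤ L * (R / ‖y‖ * ‖x - y‖ + R * (‖y‖ - ‖x‖) / ‖y‖) := by
        calc ‖φ x' - φ y'‖ ≤ L * ‖x' - y'‖ :=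
              hlip x' y' (max_le (le_of_eq hx') (le_of_eq hy'))
          _ ≤ L * (R / ‖y‖ * ‖x - y‖ + R * (‖y‖ - ‖x‖) / ‖y‖) :=
              mul_le_mul_of_nonneg_left hxy'norm hL.le
      have hnorm1 : ‖(‖x‖ / R) • (φ x' - φ y')‖ = ‖x‖ / R * ‖φ x' - φ y'‖ := by
        rw [norm_smul, Real.norm_eq_abs, abs_of_nonneg (by positivity)]
      have hnorm2 : ‖((‖x‖ - ‖y‖) / R) • φ y'‖ = (‖y‖ - ‖x‖) / R * ‖φ y'‖ := by
        rw [norm_smul, Real.norm_eq_abs, abs_div, abs_of_nonneg hR.le,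
          abs_sub_comm, abs_of_nonneg (by linarith)]
      have htri : ‖(‖x‖ / R) • (φ x' - φ y') + ((‖x‖ - ‖y‖) / R) • φ y'‖
          ≤ ‖x‖ / R * ‖φ x' - φ y'‖ + (‖y‖ - ‖x‖) / R * ‖φ y'‖ := by
        rw [← hnorm1, ← hnorm2]; exact norm_add_le _ _
      -- term 1: (‖x‖/R) * L * (R/‖y‖ * D + R*(b-a)/‖y‖) = L * (‖x‖/‖y‖) * (D + (b-a)) ≤ 2 L D
      have ht1 : ‖x‖ / R * ‖φ x' - φ y'‖ ≤ 2 * L * ‖x - y‖ := by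
        have e1 : ‖x‖ / R * (L * (R / ‖y‖ * ‖x - y‖ + R * (‖y‖ - ‖x‖) / ‖y‖))
            = L * (‖x‖ / ‖y‖) * (‖x - y‖ + (‖y‖ - ‖x‖)) := by
          field_simp
        have e2 : ‖x‖ / ‖y‖ ≤ 1 := by rw [div_le_one hy0]; exact hxy
        have e3 : ‖x‖ / R * ‖φ x' - φ y'‖
            ≤ ‖x‖ / R * (L * (R / ‖y‖ * ‖x - y‖ + R * (‖y‖ - ‖x‖) / ‖y‖)) :=
          mul_le_mul_of_nonneg_left hφ' (by positivity)
        rw [e1] at e3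
        have e4 : L * (‖x‖ / ‖y‖) * (‖x - y‖ + (‖y‖ - ‖x‖)) ≤ L * 1 * (‖x - y‖ + ‖x - y‖) := by
          apply mul_le_mul
          · exact mul_le_mul_of_nonneg_left e2 hL.le
          · linarith
          · linarith
          · positivity
        calc ‖x‖ / R * ‖φ x' - φ y'‖ ≤ L * (‖x‖ / ‖y‖) * (‖x - y‖ + (‖y‖ - ‖x‖)) := e3
          _ ≤ L * 1 * (‖x - y‖ + ‖x - y‖) := e4
          _ = 2 * L * ‖x - y‖ := by ring
      have ht2 : (‖y‖ - ‖x‖) / R * ‖φ y'‖ ≤ 2 * L * ‖x - y‖ := by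
        have e1 : (‖y‖ - ‖x‖) / R * ‖φ y'‖ ≤ (‖y‖ - ‖x‖) / R * (2 * L * R) :=
          mul_le_mul_of_nonneg_left hφy' (div_nonneg (by linarith) hR.le)
        have e2 : (‖y‖ - ‖x‖) / R * (2 * L * R) = 2 * L * (‖y‖ - ‖x‖) := by
          field_simp
        rw [e2] at e1
        nlinarith
      linarith
end

section
/- Let d, m ≥ 1, K > 0, p > 2, and let f : ℝ^d → ℝ^d and g : ℝ^d → ℝ^{d×m} (with columns g_j) satisfy the Khasminskii-type condition ⟨x, f(x)⟩ + ((p−1)/2)·Σ_{j=1}^m |g_j(x)|² ≤ K·(1 + |x|²) for all x ∈ ℝ^d. Then for any truncation level R ≥ 1, the truncations f̃ and g̃ of f and g at level R satisfy ⟨x, f̃(x)⟩ + ((p−1)/2)·Σ_{j=1}^m |g̃_j(x)|² ≤ 2K·(1 + |x|²) for all x ∈ ℝ^d. -/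
open RealInnerProductSpace

theorem stmt4 (d m : ℕ) (hd : 1 ≤ d) (hm : 1 ≤ m) (K p : ℝ) (hK : 0 < K) (hp : 2 < p)
    (f : EuclideanSpace ℝ (Fin d) → EuclideanSpace ℝ (Fin d))
    (g : EuclideanSpace ℝ (Fin d) → Fin m → EuclideanSpace ℝ (Fin d))
    (hKhas : ∀ x : EuclideanSpace ℝ (Fin d),
      ⟪x, f x⟫ + (p - 1) / 2 * ∑ j : Fin m, ‖g x j‖ ^ 2 ≤ K * (1 + ‖x‖ ^ 2))
    (R : ℝ) (hR : 1 ≤ R) :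
    ∀ x : EuclideanSpace ℝ (Fin d),
      ⟪x, trunc R f x⟫ + (p - 1) / 2 * ∑ j : Fin m, ‖trunc R (fun y => g y j) x‖ ^ 2 ≤
        2 * K * (1 + ‖x‖ ^ 2) := by
  intro x
  have hR0 : (0:ℝ) < R := lt_of_lt_of_le one_pos hR
  by_cases hx : ‖x‖ ≤ R
  · simp only [trunc, if_pos hx]
    calc ⟪x, f x⟫ + (p - 1) / 2 * ∑ j : Fin m, ‖g x j‖ ^ 2 ≤ K * (1 + ‖x‖ ^ 2) := hKhas x
      _ ≤ 2 * K * (1 + ‖x‖ ^ 2) := by nlinarith [sq_nonneg ‖x‖]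
  · simp only [trunc, if_neg hx]
    push_neg at hx
    have ht0 : (0:ℝ) < ‖x‖ := lt_trans hR0 hx
    set t := ‖x‖ with htdef
    set c := t / R with hcdef
    set y : EuclideanSpace ℝ (Fin d) := (R / t) • x with hydef
    have hc0 : 0 < c := div_pos ht0 hR0
    have hxy : x = c • y := by
      rw [hydef, smul_smul, hcdef]
      rw [div_mul_div_comm, mul_comm t R, div_self (by positivity), one_smul]
    have hny : ‖y‖ = R := by
      rw [hydef, norm_smul, Real.norm_eq_abs, abs_of_pos (by positivity)]
      field_simp
      exact htdef.symm
    have hinner : ⟪x, c • f y⟫ = c ^ 2 * ⟪y, f y⟫ := by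
      rw [hxy, real_inner_smul_left, real_inner_smul_right]; ring
    have hnorms : ∀ j : Fin m, ‖c • g y j‖ ^ 2 = c ^ 2 * ‖g y j‖ ^ 2 := by
      intro j
      rw [norm_smul, Real.norm_eq_abs, abs_of_pos hc0, mul_pow]
    have key : ⟪y, f y⟫ + (p - 1) / 2 * ∑ j : Fin m, ‖g y j‖ ^ 2 ≤ K * (1 + R ^ 2) := by
      have := hKhas y
      rwa [hny] at this
    have hLHS : ⟪x, c • f y⟫ + (p - 1) / 2 * ∑ j : Fin m, ‖c • g y j‖ ^ 2
        = c ^ 2 * (⟪y, f y⟫ + (p - 1) / 2 * ∑ j : Fin m, ‖g y j‖ ^ 2) := by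
      rw [hinner]
      have : ∑ j : Fin m, ‖c • g y j‖ ^ 2 = c ^ 2 * ∑ j : Fin m, ‖g y j‖ ^ 2 := by
        rw [Finset.mul_sum]
        exact Finset.sum_congr rfl fun j _ => hnorms j
      rw [this]; ring
    rw [hLHS]
    have hc2 : c ^ 2 * (K * (1 + R ^ 2)) = K * (t ^ 2 / R ^ 2 + t ^ 2) := by
      rw [hcdef]; field_simp
    have hfrac : t ^ 2 / R ^ 2 ≤ t ^ 2 := by
      apply div_le_self (by positivity)
      nlinarith
    calc c ^ 2 * (⟪y, f y⟫ + (p - 1) / 2 * ∑ j : Fin m, ‖g y j‖ ^ 2)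
        ≤ c ^ 2 * (K * (1 + R ^ 2)) := by
          exact mul_le_mul_of_nonneg_left key (by positivity)
      _ = K * (t ^ 2 / R ^ 2 + t ^ 2) := hc2
      _ ≤ 2 * K * (1 + t ^ 2) := by nlinarith
end

section
/- Let d, m ≥ 1, and let λ > 0 and p > 0. Suppose f : ℝ^d → ℝ^d and g : ℝ^d → ℝ^{d×m} (with columns g_j) satisfy ⟨x, f(x)⟩ + ((p−1)/2)·Σ_{j=1}^m |g_j(x)|² ≤ −λ·|x|² for all x ∈ ℝ^d. Then for any truncation level R > 0, the truncations f̃ and g̃ of f and g at level R satisfy ⟨x, f̃(x)⟩ + ((p−1)/2)·Σ_{j=1}^m |g̃_j(x)|² ≤ −λ·|x|² for all x ∈ ℝ^d. -/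
open RealInnerProductSpace

theorem stmt5 (d m : ℕ) (hd : 1 ≤ d) (hm : 1 ≤ m) (lam p : ℝ) (hlam : 0 < lam) (hp : 0 < p)
    (f : EuclideanSpace ℝ (Fin d) → EuclideanSpace ℝ (Fin d))
    (g : EuclideanSpace ℝ (Fin d) → Fin m → EuclideanSpace ℝ (Fin d))
    (hdis : ∀ x : EuclideanSpace ℝ (Fin d),
      ⟪x, f x⟫ + (p - 1) / 2 * ∑ j : Fin m, ‖g x j‖ ^ 2 ≤ -lam * ‖x‖ ^ 2)
    (R : ℝ) (hR : 0 < R) :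
    ∀ x : EuclideanSpace ℝ (Fin d),
      ⟪x, trunc R f x⟫ + (p - 1) / 2 * ∑ j : Fin m, ‖trunc R (fun y => g y j) x‖ ^ 2 ≤
        -lam * ‖x‖ ^ 2 := by
  intro x
  by_cases hx : ‖x‖ ≤ R
  · simp only [trunc, if_pos hx]
    exact hdis x
  · simp only [trunc, if_neg hx]
    push_neg at hx
    have hxpos : (0:ℝ) < ‖x‖ := lt_trans hR hx
    set c : ℝ := ‖x‖ / R with hc
    set y : EuclideanSpace ℝ (Fin d) := (R / ‖x‖) • x with hy
    have hcpos : 0 < c := div_pos hxpos hR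
    have hxy : x = c • y := by
      rw [hy, smul_smul, hc, div_mul_div_comm, mul_comm, div_self (by positivity), one_smul]
    have hny : ‖y‖ = R := by
      rw [hy, norm_smul, Real.norm_of_nonneg (by positivity), div_mul_cancel₀ _ hxpos.ne']
    have hinner : ⟪x, c • f y⟫ = c ^ 2 * ⟪y, f y⟫ := by
      rw [hxy, real_inner_smul_left, real_inner_smul_right]; ring
    have hnorm : ∀ j, ‖c • g y j‖ ^ 2 = c ^ 2 * ‖g y j‖ ^ 2 := by
      intro j
      rw [norm_smul, Real.norm_of_nonneg hcpos.le, mul_pow]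
    calc ⟪x, c • f y⟫ + (p - 1) / 2 * ∑ j : Fin m, ‖c • g y j‖ ^ 2
        = c ^ 2 * (⟪y, f y⟫ + (p - 1) / 2 * ∑ j : Fin m, ‖g y j‖ ^ 2) := by
          rw [hinner]
          simp_rw [hnorm]
          rw [← Finset.mul_sum]
          ring
      _ ≤ c ^ 2 * (-lam * ‖y‖ ^ 2) := by
          apply mul_le_mul_of_nonneg_left (hdis y) (by positivity)
      _ = -lam * ‖x‖ ^ 2 := by
          rw [hny, hc]
          field_simp
end
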